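/- Let x be a real centered Gaussian process with covariance R satisfying, for some ρ ∈ [1,2) and constant C: ‖R‖_{ρ'-var;[a,b]×[c,d]}^{2ρ'} ≤ C(b−a)(d−c) for some ρ' ∈ (ρ,2), and let ω be a superadditive 2d control with ‖R‖_{ρ'-var;A}^{ρ'} ≤ ω(A) for all rectangles A and ω([s,t]²) ≤ C(t−s). Then for the uniform partition tₖ = kT/n and partition points s = t_{m₁} < t = t_{m₂}, Σ_{k,l=m₁}^{m₂−1} ‖R‖_{ρ'-var;[t_k,t_{k+1}]×[t_l,t_{l+1}]}^{ρ'} ≤ ω([s,t]²) ≤ C(t−s), and consequently Σ_{k,l} ‖R‖_{ρ'-var;[t_k,t_{k+1}]×[t_l,t_{l+1}]}² ≤ C' (T/n)^{2/ρ'−1} (t−s), where C' depends on ρ, ρ', T, C. -/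

import Mathlib

open MeasureTheory ProbabilityTheory Finset Set
open scoped ENNReal NNReal

def IsPartitionOn (a b : ℝ) (n : ℕ) (τ : ℕ → ℝ) : Prop :=
  Monotone τ ∧ τ 0 = a ∧ τ n = b

def rectIncr (R : ℝ → ℝ → ℝ) (s t u v : ℝ) : ℝ :=
  R t v - R t u - R s v + R s u

noncomputable def pVar2d (p : ℝ) (R : ℝ → ℝ → ℝ) (a b c d : ℝ) : ℝ≥0∞ :=
  ⨆ (n : ℕ) (m : ℕ) (τ : ℕ → ℝ) (σ : ℕ → ℝ)
    (_ : IsPartitionOn a b n τ) (_ : IsPartitionOn c d m σ),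
    ENNReal.ofReal ((∑ i ∈ Finset.range n, ∑ j ∈ Finset.range m,
      |rectIncr R (τ i) (τ (i + 1)) (σ j) (σ (j + 1))| ^ p) ^ (1 / p))

def IsRectPartition (a b c d : ℝ) (k : ℕ) (r : ℕ → ℝ × ℝ × ℝ × ℝ) : Prop :=
  (∀ i < k, (r i).1 ≤ (r i).2.1 ∧ (r i).2.2.1 ≤ (r i).2.2.2) ∧
  (⋃ i ∈ Finset.range k,
      Set.Icc (r i).1 (r i).2.1 ×ˢ Set.Icc (r i).2.2.1 (r i).2.2.2)
    = Set.Icc a b ×ˢ Set.Icc c d ∧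
  (∀ i < k, ∀ j < k, i ≠ j →
    Disjoint (Set.Ioo (r i).1 (r i).2.1 ×ˢ Set.Ioo (r i).2.2.1 (r i).2.2.2)
      (Set.Ioo (r j).1 (r j).2.1 ×ˢ Set.Ioo (r j).2.2.1 (r j).2.2.2))

def IsCenteredGaussianProcess {Ω : Type*} [MeasurableSpace Ω] (P : Measure Ω)
    (x : ℝ → Ω → ℝ) (T : ℝ) : Prop :=
  ∀ (m : ℕ) (c : Fin m → ℝ) (u : Fin m → ℝ), (∀ i, u i ∈ Set.Icc (0 : ℝ) T) →
    ∃ v : ℝ≥0, P.map (fun ω => ∑ i, c i * x (u i) ω) = gaussianReal 0 v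

/-!
The control `w` may be negative, where `ENNReal.ofReal` truncates it to `0`, so its
superadditivity cannot be applied to the grid of cells directly. Instead the cells are merged
one at a time along a row: a block whose cells all have zero variation is absorbed into its
neighbour, and when two blocks of nonzero variation are merged both carry `w > 0`, so that
`ofReal` is additive on them and splitting a rectangle in two suffices. Doing this along rows
and then along columns gives `∑ ‖R‖^ρ' ≤ w([s,t]²) ≤ C (t - s)`. For the squared sum, each cell
has `‖R‖^(2ρ') ≤ C (T/n)²`, hence
`‖R‖² = (‖R‖^(2ρ'))^((2-ρ')/(2ρ')) ‖R‖^ρ' ≤ (C (T/n)²)^((2-ρ')/(2ρ')) ‖R‖^ρ'`.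
-/

theorem sum_range_succ_le_sum_range_add_two {f : ℕ → ℝ} (hf : ∀ i, 0 ≤ f i) (n : ℕ) :
    ∑ i ∈ range n, f (i + 1) ≤ ∑ i ∈ range (n + 2), f i := by
  rw [Finset.sum_range_succ _ (n + 1), Finset.sum_range_succ']
  linarith [hf 0, hf (n + 1)]

/-- The partition `a', τ 0, …, τ n, b'` of `[a', b']`. -/
noncomputable def extendPartition (a' b' : ℝ) (n : ℕ) (τ : ℕ → ℝ) : ℕ → ℝ :=
  fun i => if i = 0 then a' else if i ≤ n + 1 then τ (i - 1) else b'

theorem extendPartition_succ (a' b' : ℝ) {n : ℕ} (τ : ℕ → ℝ) {i : ℕ} (hi : i ≤ n) :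
    extendPartition a' b' n τ (i + 1) = τ i := by
  simp [extendPartition, hi]

theorem IsPartitionOn.extend {a b a' b' : ℝ} {n : ℕ} {τ : ℕ → ℝ}
    (h : IsPartitionOn a b n τ) (ha : a' ≤ a) (hb : b ≤ b') :
    IsPartitionOn a' b' (n + 2) (extendPartition a' b' n τ) := by
  obtain ⟨hmono, h0, hn⟩ := h
  have hge : ∀ k, a' ≤ τ k := fun k => ha.trans (h0 ▸ hmono k.zero_le)
  have hle : ∀ k ≤ n, τ k ≤ b' := fun k hk => (hn ▸ hmono hk).trans hb
  refine ⟨monotone_nat_of_le_succ fun i => ?_, by simp [extendPartition],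
    by simp [extendPartition]⟩
  simp only [extendPartition]
  split_ifs <;> first
    | omega | rfl | contradiction | exact hge _ | exact hmono (by omega) | exact hle _ (by omega)

theorem pVar2d_mono {p : ℝ} (hp : 0 ≤ p) (R : ℝ → ℝ → ℝ) {a b c d a' b' c' d' : ℝ}
    (ha : a' ≤ a) (hb : b ≤ b') (hc : c' ≤ c) (hd : d ≤ d') :
    pVar2d p R a b c d ≤ pVar2d p R a' b' c' d' := by
  refine iSup_le fun n => iSup_le fun m => iSup_le fun τ => iSup_le fun σ =>
    iSup_le fun hτ => iSup_le fun hσ => ?_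
  set τ' := extendPartition a' b' n τ
  set σ' := extendPartition c' d' m σ
  have hincr : ∀ i j, 0 ≤ |rectIncr R (τ' i) (τ' (i + 1)) (σ' j) (σ' (j + 1))| ^ p :=
    fun _ _ => by positivity
  have hsum : ∑ i ∈ range n, ∑ j ∈ range m, |rectIncr R (τ i) (τ (i + 1)) (σ j) (σ (j + 1))| ^ p
      ≤ ∑ i ∈ range (n + 2), ∑ j ∈ range (m + 2),
          |rectIncr R (τ' i) (τ' (i + 1)) (σ' j) (σ' (j + 1))| ^ p := by
    refine (Finset.sum_le_sum fun i hi => ?_).trans (sum_range_succ_le_sum_range_add_two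
      (fun i => Finset.sum_nonneg fun j _ => hincr i j) n)
    refine le_of_eq_of_le ?_ (sum_range_succ_le_sum_range_add_two (hincr (i + 1)) m)
    refine Finset.sum_congr rfl fun j hj => ?_
    rw [Finset.mem_range] at hi hj
    simp only [τ', σ', extendPartition_succ _ _ _ hi.le, extendPartition_succ _ _ _ hi,
      extendPartition_succ _ _ _ hj.le, extendPartition_succ _ _ _ hj]
  refine le_trans ?_ (le_iSup_of_le (n + 2) <| le_iSup_of_le (m + 2) <| le_iSup_of_le τ' <|
    le_iSup_of_le σ' <| le_iSup_of_le (hτ.extend ha hb) <|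
    le_iSup_of_le (hσ.extend hc hd) le_rfl)
  gcongr

theorem isRectPartition_split_fst {a x b c d : ℝ} (hax : a ≤ x) (hxb : x ≤ b) (hcd : c ≤ d) :
    IsRectPartition a b c d 2 (fun i => if i = 0 then (a, x, c, d) else (x, b, c, d)) := by
  have hdisj : Disjoint (Ioo a x ×ˢ Ioo c d) (Ioo x b ×ˢ Ioo c d) :=
    Set.disjoint_prod.mpr <| .inl <|
      Ico_disjoint_Ico_same.mono Ioo_subset_Ico_self Ioo_subset_Ico_self
  refine ⟨fun i _ => ?_, ?_, fun i hi j hj hij => ?_⟩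
  · by_cases hi : i = 0 <;> simp [hi, hax, hxb, hcd]
  · rw [show range 2 = {0, 1} from rfl, Finset.set_biUnion_insert, Finset.set_biUnion_singleton]
    show Icc a x ×ˢ Icc c d ∪ Icc x b ×ˢ Icc c d = _
    rw [← Set.union_prod, Set.Icc_union_Icc_eq_Icc hax hxb]
  · interval_cases i <;> interval_cases j
    all_goals first | exact absurd rfl hij | exact hdisj | exact hdisj.symm

theorem isRectPartition_split_snd {a b c y d : ℝ} (hab : a ≤ b) (hcy : c ≤ y) (hyd : y ≤ d) :
    IsRectPartition a b c d 2 (fun i => if i = 0 then (a, b, c, y) else (a, b, y, d)) := by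
  have hdisj : Disjoint (Ioo a b ×ˢ Ioo c y) (Ioo a b ×ˢ Ioo y d) :=
    Set.disjoint_prod.mpr <| .inr <|
      Ico_disjoint_Ico_same.mono Ioo_subset_Ico_self Ioo_subset_Ico_self
  refine ⟨fun i _ => ?_, ?_, fun i hi j hj hij => ?_⟩
  · by_cases hi : i = 0 <;> simp [hi, hab, hcy, hyd]
  · rw [show range 2 = {0, 1} from rfl, Finset.set_biUnion_insert, Finset.set_biUnion_singleton]
    show Icc a b ×ˢ Icc c y ∪ Icc a b ×ˢ Icc y d = _
    rw [← Set.prod_union, Set.Icc_union_Icc_eq_Icc hcy hyd]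
  · interval_cases i <;> interval_cases j
    all_goals first | exact absurd rfl hij | exact hdisj | exact hdisj.symm

def IsSuperadditiveOn (T : ℝ) (w : ℝ → ℝ → ℝ → ℝ → ℝ) : Prop :=
  ∀ a b c d : ℝ, 0 ≤ a → a ≤ b → b ≤ T → 0 ≤ c → c ≤ d → d ≤ T →
    ∀ (k : ℕ) (r : ℕ → ℝ × ℝ × ℝ × ℝ), IsRectPartition a b c d k r →
      ∑ i ∈ Finset.range k, w (r i).1 (r i).2.1 (r i).2.2.1 (r i).2.2.2 ≤ w a b c d

theorem IsSuperadditiveOn.add_le_fst {T a x b c d : ℝ} {w : ℝ → ℝ → ℝ → ℝ → ℝ}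
    (hw : IsSuperadditiveOn T w) (ha : 0 ≤ a) (hax : a ≤ x) (hxb : x ≤ b) (hb : b ≤ T)
    (hc : 0 ≤ c) (hcd : c ≤ d) (hd : d ≤ T) : w a x c d + w x b c d ≤ w a b c d := by
  simpa [Finset.sum_range_succ] using
    hw a b c d ha (hax.trans hxb) hb hc hcd hd 2 _ (isRectPartition_split_fst hax hxb hcd)

theorem IsSuperadditiveOn.add_le_snd {T a b c y d : ℝ} {w : ℝ → ℝ → ℝ → ℝ → ℝ}
    (hw : IsSuperadditiveOn T w) (ha : 0 ≤ a) (hab : a ≤ b) (hb : b ≤ T) (hc : 0 ≤ c)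
    (hcy : c ≤ y) (hyd : y ≤ d) (hd : d ≤ T) : w a b c y + w a b y d ≤ w a b c d := by
  simpa [Finset.sum_range_succ] using
    hw a b c d ha hab hb hc (hcy.trans hyd) hd 2 _ (isRectPartition_split_snd hab hcy hyd)

theorem sum_Ico_le_ofReal_of_superadditive {v : ℕ → ℝ≥0∞} {W : ℕ → ℕ → ℝ} {a b : ℕ}
    (hv : ∀ i k j, a ≤ i → i ≤ k → k < j → j ≤ b → v k ≤ ENNReal.ofReal (W i j))
    (hW : ∀ i k j, a ≤ i → i ≤ k → k ≤ j → j ≤ b → W i k + W k j ≤ W i j) (hab : a ≤ b) :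
    ∑ k ∈ Ico a b, v k ≤ ENNReal.ofReal (W a b) := by
  -- Any right end `j ≥ m` is allowed, so that trailing cells with `v = 0` can be absorbed.
  suffices h : ∀ m, a ≤ m → ∀ j, m ≤ j → j ≤ b → ∑ k ∈ Ico a m, v k ≤ ENNReal.ofReal (W a j) from
    h b hab b le_rfl le_rfl
  intro m ham
  induction m, ham using Nat.le_induction with
  | base => simp
  | succ m ham ih =>
    intro j hmj hjb
    rw [Finset.sum_Ico_succ_top ham]
    by_cases hS : ∑ k ∈ Ico a m, v k = 0
    · rw [hS, zero_add]
      exact hv a m j le_rfl ham hmj hjb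
    by_cases hvm : v m = 0
    · rw [hvm, add_zero]
      exact ih j (by omega) hjb
    have hS_le := ih m le_rfl (by omega)
    have hvm_le := hv m m j ham le_rfl hmj hjb
    have hWam : 0 ≤ W a m :=
      (ENNReal.ofReal_pos.mp ((pos_iff_ne_zero.mpr hS).trans_le hS_le)).le
    have hWmj : 0 ≤ W m j :=
      (ENNReal.ofReal_pos.mp ((pos_iff_ne_zero.mpr hvm).trans_le hvm_le)).le
    calc ∑ k ∈ Ico a m, v k + v m ≤ ENNReal.ofReal (W a m) + ENNReal.ofReal (W m j) :=
          add_le_add hS_le hvm_le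
      _ = ENNReal.ofReal (W a m + W m j) := (ENNReal.ofReal_add hWam hWmj).symm
      _ ≤ ENNReal.ofReal (W a j) :=
          ENNReal.ofReal_le_ofReal (hW a m j le_rfl ham (by omega) hjb)

theorem sum_Ico_Ico_le_ofReal_of_superadditive {v : ℕ → ℕ → ℝ≥0∞}
    {W : ℕ → ℕ → ℕ → ℕ → ℝ} {a b c d : ℕ}
    (hv : ∀ i k j i' l j', a ≤ i → i ≤ k → k < j → j ≤ b → c ≤ i' → i' ≤ l → l < j' → j' ≤ d →
      v k l ≤ ENNReal.ofReal (W i j i' j'))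
    (hW₁ : ∀ i k j, a ≤ i → i ≤ k → k ≤ j → j ≤ b → W i k c d + W k j c d ≤ W i j c d)
    (hW₂ : ∀ i j i' k j', a ≤ i → i < j → j ≤ b → c ≤ i' → i' ≤ k → k ≤ j' → j' ≤ d →
      W i j i' k + W i j k j' ≤ W i j i' j')
    (hab : a ≤ b) (hcd : c ≤ d) :
    ∑ k ∈ Ico a b, ∑ l ∈ Ico c d, v k l ≤ ENNReal.ofReal (W a b c d) :=
  sum_Ico_le_ofReal_of_superadditive
    (fun i k j hai hik hkj hjb => sum_Ico_le_ofReal_of_superadditive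
      (fun i' l j' hci' hi'l hlj' hj'd => hv i k j i' l j' hai hik hkj hjb hci' hi'l hlj' hj'd)
      (fun i' k' j' hci' hi'k hkj' hj'd =>
        hW₂ i j i' k' j' hai (hik.trans_lt hkj) hjb hci' hi'k hkj' hj'd) hcd)
    hW₁ hab

theorem ENNReal.rpow_le_mul_rpow_of_rpow_le {x D : ℝ≥0∞} {p q r : ℝ} (hp : 0 ≤ p)
    (hpr : p ≤ r) (hq : 0 < q) (hxD : x ^ q ≤ D) : x ^ r ≤ D ^ ((r - p) / q) * x ^ p :=
  calc x ^ r = (x ^ q) ^ ((r - p) / q) * x ^ p := by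
        rw [← ENNReal.rpow_mul, mul_div_cancel₀ _ hq.ne',
          ← ENNReal.rpow_add_of_nonneg _ _ (sub_nonneg.mpr hpr) hp, sub_add_cancel]
    _ ≤ D ^ ((r - p) / q) * x ^ p := by gcongr

theorem sum_pVar2d_grid_rpow_le {T p : ℝ} (hp : 0 ≤ p) {R : ℝ → ℝ → ℝ}
    {w : ℝ → ℝ → ℝ → ℝ → ℝ} (hw : IsSuperadditiveOn T w)
    (hRw : ∀ a b c d : ℝ, 0 ≤ a → a ≤ b → b ≤ T → 0 ≤ c → c ≤ d → d ≤ T →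
      pVar2d p R a b c d ^ p ≤ ENNReal.ofReal (w a b c d))
    {g : ℕ → ℝ} (hg : Monotone g) {i₁ i₂ j₁ j₂ : ℕ} (hi : i₁ ≤ i₂) (hj : j₁ ≤ j₂)
    (hi₁ : 0 ≤ g i₁) (hi₂ : g i₂ ≤ T) (hj₁ : 0 ≤ g j₁) (hj₂ : g j₂ ≤ T) :
    ∑ k ∈ Ico i₁ i₂, ∑ l ∈ Ico j₁ j₂, pVar2d p R (g k) (g (k + 1)) (g l) (g (l + 1)) ^ p
      ≤ ENNReal.ofReal (w (g i₁) (g i₂) (g j₁) (g j₂)) := by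
  have hx₀ {i : ℕ} (h : i₁ ≤ i) : 0 ≤ g i := hi₁.trans (hg h)
  have hxT {i : ℕ} (h : i ≤ i₂) : g i ≤ T := (hg h).trans hi₂
  have hy₀ {j : ℕ} (h : j₁ ≤ j) : 0 ≤ g j := hj₁.trans (hg h)
  have hyT {j : ℕ} (h : j ≤ j₂) : g j ≤ T := (hg h).trans hj₂
  refine sum_Ico_Ico_le_ofReal_of_superadditive
    (W := fun i j i' j' => w (g i) (g j) (g i') (g j')) ?_ ?_ ?_ hi hj
  · intro i k j i' l j' hi₁i hik hkj hji₂ hj₁i' hi'l hlj' hj'j₂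
    calc pVar2d p R (g k) (g (k + 1)) (g l) (g (l + 1)) ^ p
        ≤ pVar2d p R (g i) (g j) (g i') (g j') ^ p :=
          ENNReal.rpow_le_rpow (pVar2d_mono hp R (hg hik) (hg hkj) (hg hi'l) (hg hlj')) hp
      _ ≤ ENNReal.ofReal (w (g i) (g j) (g i') (g j')) :=
          hRw _ _ _ _ (hx₀ hi₁i) (hg (hik.trans hkj.le)) (hxT hji₂) (hy₀ hj₁i')
            (hg (hi'l.trans hlj'.le)) (hyT hj'j₂)
  · intro i k j hi₁i hik hkj hji₂
    exact hw.add_le_fst (hx₀ hi₁i) (hg hik) (hg hkj) (hxT hji₂) hj₁ (hg hj) hj₂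
  · intro i j i' k j' hi₁i hij hji₂ hj₁i' hi'k hkj' hj'j₂
    exact hw.add_le_snd (hx₀ hi₁i) (hg hij.le) (hxT hji₂) (hy₀ hj₁i') (hg hi'k) (hg hkj')
      (hyT hj'j₂)

theorem grid_variation_sum_bound_general
    (T C ρ ρ' : ℝ) (hρ : 1 ≤ ρ) (hρ' : ρ < ρ') (hρ'2 : ρ' < 2)
    (hT : 0 < T) (hC : 0 < C) :
    ∃ C' : ℝ, 0 < C' ∧
      ∀ (Ω : Type) [MeasurableSpace Ω] (P : Measure Ω), IsProbabilityMeasure P →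
      ∀ (x : ℝ → Ω → ℝ) (R : ℝ → ℝ → ℝ) (w : ℝ → ℝ → ℝ → ℝ → ℝ),
        IsCenteredGaussianProcess P x T →
        (∀ s t : ℝ, R s t = ∫ ω, x s ω * x t ω ∂P) →
        (∀ a b c d : ℝ, 0 ≤ a → a ≤ b → b ≤ T → 0 ≤ c → c ≤ d → d ≤ T →
          ∀ (k : ℕ) (r : ℕ → ℝ × ℝ × ℝ × ℝ), IsRectPartition a b c d k r →
            ∑ i ∈ Finset.range k, w (r i).1 (r i).2.1 (r i).2.2.1 (r i).2.2.2
              ≤ w a b c d) →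
        (∀ a b c d : ℝ, 0 ≤ a → a ≤ b → b ≤ T → 0 ≤ c → c ≤ d → d ≤ T →
          pVar2d ρ' R a b c d ^ ρ' ≤ ENNReal.ofReal (w a b c d)) →
        (∀ s t : ℝ, 0 ≤ s → s ≤ t → t ≤ T → w s t s t ≤ C * (t - s)) →
        (∀ a b c d : ℝ, 0 ≤ a → a ≤ b → b ≤ T → 0 ≤ c → c ≤ d → d ≤ T →
          pVar2d ρ' R a b c d ^ (2 * ρ') ≤ ENNReal.ofReal (C * (b - a) * (d - c))) →
        ∀ n m₁ m₂ : ℕ, 0 < n → m₁ < m₂ → m₂ ≤ n →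
          (∑ k ∈ Finset.Ico m₁ m₂, ∑ l ∈ Finset.Ico m₁ m₂,
              pVar2d ρ' R (k * T / n) ((k + 1 : ℕ) * T / n)
                (l * T / n) ((l + 1 : ℕ) * T / n) ^ ρ')
            ≤ ENNReal.ofReal (w (m₁ * T / n) (m₂ * T / n) (m₁ * T / n) (m₂ * T / n)) ∧
          (∑ k ∈ Finset.Ico m₁ m₂, ∑ l ∈ Finset.Ico m₁ m₂,
              pVar2d ρ' R (k * T / n) ((k + 1 : ℕ) * T / n)
                (l * T / n) ((l + 1 : ℕ) * T / n) ^ ρ')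
            ≤ ENNReal.ofReal (C * (m₂ * T / n - m₁ * T / n)) ∧
          (∑ k ∈ Finset.Ico m₁ m₂, ∑ l ∈ Finset.Ico m₁ m₂,
              pVar2d ρ' R (k * T / n) ((k + 1 : ℕ) * T / n)
                (l * T / n) ((l + 1 : ℕ) * T / n) ^ (2 : ℝ))
            ≤ ENNReal.ofReal
                (C' * (T / n) ^ (2 / ρ' - 1) * (m₂ * T / n - m₁ * T / n)) := by
  have hρ'0 : 0 < ρ' := by linarith
  set e := (2 - ρ') / (2 * ρ')
  refine ⟨C ^ e * C, by positivity, ?_⟩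
  intro Ω _ P _ x R w _ _ hw hRw hwC hRC n m₁ m₂ hn hm hm₂
  set g : ℕ → ℝ := fun k => k * T / n
  have hg : Monotone g := fun i j hij => by dsimp only [g]; gcongr
  have hg₀ (k : ℕ) : 0 ≤ g k := by positivity
  have hgT {k : ℕ} (hk : k ≤ n) : g k ≤ T := by
    rw [div_le_iff₀ (by positivity)]; nlinarith [(Nat.cast_le (α := ℝ)).mpr hk]
  have hstep (k : ℕ) : g (k + 1) - g k = T / n := by
    dsimp only [g]; push_cast; ring
  have h₁ := sum_pVar2d_grid_rpow_le hρ'0.le hw hRw hg hm.le hm.le (hg₀ _) (hgT hm₂)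
    (hg₀ _) (hgT hm₂)
  have h₂ := h₁.trans (ENNReal.ofReal_le_ofReal (hwC _ _ (hg₀ _) (hg hm.le) (hgT hm₂)))
  refine ⟨h₁, h₂, ?_⟩
  set D := ENNReal.ofReal (C * (T / n) * (T / n))
  have hcell {k l : ℕ} (hk : k < m₂) (hl : l < m₂) :
      pVar2d ρ' R (g k) (g (k + 1)) (g l) (g (l + 1)) ^ (2 : ℝ)
        ≤ D ^ e * pVar2d ρ' R (g k) (g (k + 1)) (g l) (g (l + 1)) ^ ρ' := by
    refine ENNReal.rpow_le_mul_rpow_of_rpow_le hρ'0.le hρ'2.le (by positivity) ?_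
    simpa only [hstep] using hRC _ _ _ _ (hg₀ k) (hg k.le_succ) (hgT (by omega)) (hg₀ l)
      (hg l.le_succ) (hgT (by omega))
  calc _ ≤ ∑ k ∈ Ico m₁ m₂, ∑ l ∈ Ico m₁ m₂,
          D ^ e * pVar2d ρ' R (g k) (g (k + 1)) (g l) (g (l + 1)) ^ ρ' :=
        Finset.sum_le_sum fun k hk => Finset.sum_le_sum fun l hl =>
          hcell (Finset.mem_Ico.mp hk).2 (Finset.mem_Ico.mp hl).2
    _ = D ^ e * ∑ k ∈ Ico m₁ m₂, ∑ l ∈ Ico m₁ m₂,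
          pVar2d ρ' R (g k) (g (k + 1)) (g l) (g (l + 1)) ^ ρ' := by
        simp only [Finset.mul_sum]
    _ ≤ D ^ e * ENNReal.ofReal (C * (g m₂ - g m₁)) := by gcongr
    _ = _ := by
        have he : e + e = 2 / ρ' - 1 := by simp only [e]; field_simp; ring
        rw [ENNReal.ofReal_rpow_of_nonneg (by positivity) (by positivity),
          ← ENNReal.ofReal_mul (by positivity), Real.mul_rpow (by positivity) (by positivity),
          Real.mul_rpow (by positivity) (by positivity), ← he, Real.rpow_add (by positivity)]
        congr 1
        simp only [g]
        ring

/-- Superadditivity estimates for the 2d `ρ'`-variation of the covariance `R` of a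
centered Gaussian process over uniform grid cells, and the resulting
`(T/n)^{2/ρ'−1}(t−s)` bound on the sum of squared cell variations. -/
theorem grid_variation_sum_bound
    (T C ρ ρ' : ℝ) (hρ : 1 ≤ ρ) (hρ2 : ρ < 2) (hρ' : ρ < ρ') (hρ'2 : ρ' < 2)
    (hT : 0 < T) (hC : 0 < C) :
    ∃ C' : ℝ, 0 < C' ∧
      ∀ (Ω : Type) [MeasurableSpace Ω] (P : Measure Ω), IsProbabilityMeasure P →
      ∀ (x : ℝ → Ω → ℝ) (R : ℝ → ℝ → ℝ) (w : ℝ → ℝ → ℝ → ℝ → ℝ),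
        IsCenteredGaussianProcess P x T →
        (∀ s t : ℝ, R s t = ∫ ω, x s ω * x t ω ∂P) →
        (∀ a b c d : ℝ, 0 ≤ a → a ≤ b → b ≤ T → 0 ≤ c → c ≤ d → d ≤ T →
          ∀ (k : ℕ) (r : ℕ → ℝ × ℝ × ℝ × ℝ), IsRectPartition a b c d k r →
            ∑ i ∈ Finset.range k, w (r i).1 (r i).2.1 (r i).2.2.1 (r i).2.2.2
              ≤ w a b c d) →
        (∀ a b c d : ℝ, 0 ≤ a → a ≤ b → b ≤ T → 0 ≤ c → c ≤ d → d ≤ T →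
          pVar2d ρ' R a b c d ^ ρ' ≤ ENNReal.ofReal (w a b c d)) →
        (∀ s t : ℝ, 0 ≤ s → s ≤ t → t ≤ T → w s t s t ≤ C * (t - s)) →
        (∀ a b c d : ℝ, 0 ≤ a → a ≤ b → b ≤ T → 0 ≤ c → c ≤ d → d ≤ T →
          pVar2d ρ' R a b c d ^ (2 * ρ') ≤ ENNReal.ofReal (C * (b - a) * (d - c))) →
        ∀ n m₁ m₂ : ℕ, 0 < n → m₁ < m₂ → m₂ ≤ n →
          (∑ k ∈ Finset.Ico m₁ m₂, ∑ l ∈ Finset.Ico m₁ m₂,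
              pVar2d ρ' R (k * T / n) ((k + 1 : ℕ) * T / n)
                (l * T / n) ((l + 1 : ℕ) * T / n) ^ ρ')
            ≤ ENNReal.ofReal (w (m₁ * T / n) (m₂ * T / n) (m₁ * T / n) (m₂ * T / n)) ∧
          (∑ k ∈ Finset.Ico m₁ m₂, ∑ l ∈ Finset.Ico m₁ m₂,
              pVar2d ρ' R (k * T / n) ((k + 1 : ℕ) * T / n)
                (l * T / n) ((l + 1 : ℕ) * T / n) ^ ρ')
            ≤ ENNReal.ofReal (C * (m₂ * T / n - m₁ * T / n)) ∧
          (∑ k ∈ Finset.Ico m₁ m₂, ∑ l ∈ Finset.Ico m₁ m₂,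
              pVar2d ρ' R (k * T / n) ((k + 1 : ℕ) * T / n)
                (l * T / n) ((l + 1 : ℕ) * T / n) ^ (2 : ℝ))
            ≤ ENNReal.ofReal
                (C' * (T / n) ^ (2 / ρ' - 1) * (m₂ * T / n - m₁ * T / n)) :=
  grid_variation_sum_bound_general T C ρ ρ' hρ hρ' hρ'2 hT hC
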